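/- For the order-m minimal multicritical measure coefficients γ_r, the function D(φ) = ∑_{r≥1} 2 r γ_r cos(rφ) satisfies D(φ) − (m+1)/m = −4^m C(2m, m−1)^{−1} sin^{2m}(φ/2) for all real φ; in particular D is non-increasing on [0, π]. -/

import Mathlib

open Finset Real

/-!
With `w = exp (iφ/2)` one has `w - w⁻¹ = 2i sin (φ/2)`, so expanding `(w - w⁻¹)^(2m)`
binomially and pairing the terms `w^(±2r)` gives
`4^m sin^(2m)(φ/2) = C(2m,m) + 2 ∑_{r=1}^m (-1)^r C(2m,m+r) cos (rφ)`.
The sum on the right is `-C(2m,m-1)` times `D(φ)`, and `C(2m,m) = (m+1)/m · C(2m,m-1)`.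
Monotonicity follows because `sin (φ/2)` is nonnegative and increasing on `[0, π]`.
-/

lemma sum_range_two_mul_add_one_eq {M : Type*} [AddCommMonoid M] (m : ℕ) (f : ℕ → M) :
    ∑ k ∈ range (2 * m + 1), f k = f m + ∑ r ∈ Icc 1 m, (f (m + r) + f (m - r)) := by
  have hlow : ∑ r ∈ Icc 1 m, f (m - r) = ∑ k ∈ range m, f k := by
    rw [← Ico_add_one_right_eq_Icc, sum_Ico_eq_sum_range, ← sum_range_reflect]
    exact sum_congr rfl fun k hk => by congr 1; have := mem_range.mp hk; omega
  have hhigh : ∑ r ∈ Icc 1 m, f (m + r) = ∑ k ∈ range m, f (m + (k + 1)) := by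
    rw [← Ico_add_one_right_eq_Icc, sum_Ico_eq_sum_range]
    exact sum_congr rfl fun k _ => by rw [add_comm 1 k]
  rw [sum_add_distrib, hlow, hhigh, two_mul, add_assoc, sum_range_add, sum_range_succ']
  simp only [add_zero]
  abel

lemma neg_four_pow_mul_sin_half_pow (m : ℕ) (φ : ℝ) :
    (-4 : ℝ) ^ m * sin (φ / 2) ^ (2 * m)
      = ∑ k ∈ range (2 * m + 1), (-1) ^ k * ((2 * m).choose k : ℝ) * cos ((k - m) * φ) := by
  set x : ℂ := (φ / 2 : ℝ) * Complex.I
  have hw : Complex.exp x - Complex.exp (-x) = (2 * sin (φ / 2) : ℝ) * Complex.I := by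
    simp only [x, ← neg_mul, ← Complex.ofReal_neg, Complex.exp_mul_I]
    push_cast
    rw [Complex.cos_neg, Complex.sin_neg]
    ring
  have hterm : ∀ k ∈ range (2 * m + 1),
      Complex.exp x ^ k * (-Complex.exp (-x)) ^ (2 * m - k) * ((2 * m).choose k : ℂ)
        = (((-1) ^ k * ((2 * m).choose k : ℝ) : ℝ) : ℂ)
            * Complex.exp (((k - m) * φ : ℝ) * Complex.I) := by
    intro k hk
    have hk : k ≤ 2 * m := Nat.lt_succ_iff.mp (mem_range.mp hk)
    have hexp : Complex.exp (k * x) * Complex.exp ((2 * m - k : ℕ) * -x)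
        = Complex.exp (((k - m) * φ : ℝ) * Complex.I) := by
      rw [← Complex.exp_add]
      congr 1
      push_cast [x, Nat.cast_sub hk]
      ring
    rw [neg_pow, neg_one_pow_congr (n := k) (by simp only [Nat.even_iff]; omega),
      ← Complex.exp_nat_mul, ← Complex.exp_nat_mul, ← hexp]
    push_cast
    ring
  have hC : (((-4 : ℝ) ^ m * sin (φ / 2) ^ (2 * m) : ℝ) : ℂ)
      = ∑ k ∈ range (2 * m + 1),
        (((-1) ^ k * ((2 * m).choose k : ℝ) : ℝ) : ℂ)
          * Complex.exp (((k - m) * φ : ℝ) * Complex.I) := by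
    rw [← sum_congr rfl hterm, ← add_pow, ← sub_eq_add_neg, hw, mul_pow, pow_mul Complex.I,
      Complex.I_sq]
    push_cast
    rw [mul_pow, pow_mul (2 : ℂ), mul_right_comm, ← mul_pow]
    norm_num
  have := congrArg Complex.re hC
  simpa only [Complex.ofReal_re, Complex.re_sum, Complex.re_ofReal_mul,
    Complex.exp_ofReal_mul_I_re] using this

lemma four_pow_mul_sin_half_pow (m : ℕ) (φ : ℝ) :
    4 ^ m * sin (φ / 2) ^ (2 * m)
      = (2 * m).choose m
          + ∑ r ∈ Icc 1 m, 2 * (-1) ^ r * ((2 * m).choose (m + r) : ℝ) * cos (r * φ) := by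
  have h := neg_four_pow_mul_sin_half_pow m φ
  have hpair : ∀ r ∈ Icc 1 m,
      (-1) ^ (m + r) * ((2 * m).choose (m + r) : ℝ) * cos (((m + r : ℕ) - m : ℝ) * φ)
        + (-1) ^ (m - r) * ((2 * m).choose (m - r) : ℝ) * cos (((m - r : ℕ) - m : ℝ) * φ)
      = (-1) ^ m * (2 * (-1) ^ r * ((2 * m).choose (m + r) : ℝ) * cos (r * φ)) := by
    intro r hr
    have hr : r ≤ m := (mem_Icc.mp hr).2
    have hsign : (-1 : ℝ) ^ (m - r) = (-1) ^ (m + r) :=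
      neg_one_pow_congr (by simp only [Nat.even_iff]; omega)
    have hsymm : (2 * m).choose (m - r) = (2 * m).choose (m + r) := by
      rw [show m - r = 2 * m - (m + r) by omega, Nat.choose_symm (by omega)]
    have hcos : cos (((m - r : ℕ) - m : ℝ) * φ) = cos (((m + r : ℕ) - m : ℝ) * φ) := by
      rw [← cos_neg]
      push_cast [Nat.cast_sub hr]
      ring_nf
    rw [hsign, hsymm, hcos, pow_add]
    push_cast
    ring_nf
  rw [sum_range_two_mul_add_one_eq, sum_congr rfl hpair, ← mul_sum, sub_self, zero_mul, cos_zero,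
    mul_one, neg_pow, mul_assoc, ← mul_add] at h
  exact mul_left_cancel₀ (pow_ne_zero m (neg_ne_zero.mpr one_ne_zero)) h

lemma choose_two_mul_div_choose_pred {m : ℕ} (hm : 0 < m) :
    ((2 * m).choose m : ℝ) / (2 * m).choose (m - 1) = (m + 1) / m := by
  have h := Nat.choose_succ_right_eq (2 * m) (m - 1)
  rw [Nat.sub_add_cancel hm, show 2 * m - (m - 1) = m + 1 by omega] at h
  have hm' : (m : ℝ) ≠ 0 := by positivity
  have hC : ((2 * m).choose (m - 1) : ℝ) ≠ 0 := by
    exact_mod_cast (Nat.choose_pos (by omega)).ne'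
  rw [div_eq_div_iff hC hm']
  exact_mod_cast h.trans (mul_comm _ _)

lemma monotoneOn_sin_half_pow (n : ℕ) :
    MonotoneOn (fun φ => sin (φ / 2) ^ n) (Set.Icc 0 π) := by
  intro a ha b hb hab
  have h0 : 0 ≤ sin (a / 2) :=
    sin_nonneg_of_nonneg_of_le_pi (by linarith [ha.1]) (by linarith [ha.2, pi_pos])
  refine pow_le_pow_left₀ h0 (monotoneOn_sin ⟨?_, ?_⟩ ⟨?_, ?_⟩ (by linarith)) n <;>
    linarith [ha.1, ha.2, hb.1, hb.2, pi_pos]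

lemma sum_two_mul_gamma_cos_eq {m : ℕ} (hm : 0 < m) {γ : ℕ → ℝ}
    (hγ : ∀ r, 1 ≤ r → r ≤ m →
      γ r = (-1 : ℝ) ^ (r + 1) / r *
        ((Nat.choose (2 * m) (m + r) : ℝ) / (Nat.choose (2 * m) (m - 1) : ℝ)))
    (φ : ℝ) :
    ∑ r ∈ Icc 1 m, 2 * (r : ℝ) * γ r * cos (r * φ)
      = ((m : ℝ) + 1) / m
          - 4 ^ m * ((2 * m).choose (m - 1) : ℝ)⁻¹ * sin (φ / 2) ^ (2 * m) := by
  have hsum : ∑ r ∈ Icc 1 m, 2 * (r : ℝ) * γ r * cos (r * φ)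
      = -((2 * m).choose (m - 1) : ℝ)⁻¹ *
          ∑ r ∈ Icc 1 m, 2 * (-1) ^ r * ((2 * m).choose (m + r) : ℝ) * cos (r * φ) := by
    rw [mul_sum]
    refine sum_congr rfl fun r hr => ?_
    obtain ⟨hr1, hr2⟩ := mem_Icc.mp hr
    have hr0 : (r : ℝ) ≠ 0 := by positivity
    rw [hγ r hr1 hr2, pow_succ]
    field_simp
  rw [hsum, ← choose_two_mul_div_choose_pred hm]
  linear_combination ((2 * m).choose (m - 1) : ℝ)⁻¹ * four_pow_mul_sin_half_pow m φ

theorem stmt5_general (m : ℕ) (hm : 0 < m) (γ : ℕ → ℝ)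
    (hγ : ∀ r, 1 ≤ r → r ≤ m →
      γ r = (-1 : ℝ) ^ (r + 1) / r *
        ((Nat.choose (2 * m) (m + r) : ℝ) / (Nat.choose (2 * m) (m - 1) : ℝ))) :
    (∀ φ : ℝ,
      (∑ r ∈ Icc 1 m, 2 * (r : ℝ) * γ r * Real.cos (r * φ)) - ((m : ℝ) + 1) / m
        = -(4 : ℝ) ^ m * ((Nat.choose (2 * m) (m - 1) : ℝ))⁻¹ *
            (Real.sin (φ / 2)) ^ (2 * m)) ∧
    AntitoneOn (fun φ : ℝ => ∑ r ∈ Icc 1 m, 2 * (r : ℝ) * γ r * Real.cos (r * φ))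
      (Set.Icc 0 π) := by
  have hD := sum_two_mul_gamma_cos_eq hm hγ
  refine ⟨fun φ => by rw [hD]; ring, fun a ha b hb hab => ?_⟩
  have hsin := monotoneOn_sin_half_pow (2 * m) ha hb hab
  simp only [hD]
  gcongr

/-- For the order-`m` minimal multicritical coefficients, the function
`D(φ) = ∑_{r≥1} 2 r γ_r cos(rφ)` satisfies
`D(φ) − (m+1)/m = −4^m C(2m, m−1)⁻¹ sin^{2m}(φ/2)` for all real `φ`;
in particular `D` is non-increasing on `[0, π]`. -/
theorem stmt5 (m : ℕ) (hm : 0 < m) (γ : ℕ → ℝ)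
    (hγ : ∀ r, 1 ≤ r → r ≤ m →
      γ r = (-1 : ℝ) ^ (r + 1) / r *
        ((Nat.choose (2 * m) (m + r) : ℝ) / (Nat.choose (2 * m) (m - 1) : ℝ)))
    (hγ0 : ∀ r, m < r → γ r = 0) :
    (∀ φ : ℝ,
      (∑ r ∈ Icc 1 m, 2 * (r : ℝ) * γ r * Real.cos (r * φ)) - ((m : ℝ) + 1) / m
        = -(4 : ℝ) ^ m * ((Nat.choose (2 * m) (m - 1) : ℝ))⁻¹ *
            (Real.sin (φ / 2)) ^ (2 * m)) ∧
    AntitoneOn (fun φ : ℝ => ∑ r ∈ Icc 1 m, 2 * (r : ℝ) * γ r * Real.cos (r * φ))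
      (Set.Icc 0 π) :=
  stmt5_general m hm γ hγ
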